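/- arXiv:2405.10058 — 2 statements merged into one kernel-verified Lean document; each statement's English description precedes it below -/
import Mathlib

section
/- Fix a vertex v of G with |L_v| ≥ deg(v) + 1. Then the probability that c_v ≠ 0 and c_u ≠ c_v for every neighbor u of v is strictly greater than 1/4. (Per-iteration coloring lemma: an uncolored node gets properly colored in one iteration of the randomized procedure with probability more than 1/4.) -/
/-!
For each color `x ∈ L v`, the event "`c v = x` and no neighbor picks `x`" has probability at least
`P(c v = x) - ∑ᵤ P(c v = x) P(c u = x)` by a union bound and independence. These events are disjoint
and imply success; summing over `x` gives at least `1/2 - (1/(2k)) ∑ᵤ P(c u ∈ L v)`, where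
`k = |L v|`. Each `P(c u ∈ L v) ≤ 1/2` because `c u = 0` has probability `1/2`, so the bound is
`1/2 - deg(v)/(4k) > 1/4` as `deg(v) < k`.
-/

open MeasureTheory ProbabilityTheory ENNReal

section

variable {Ω ι α : Type*} [MeasurableSpace Ω] {P : Measure Ω}

lemma measureReal_eq_le_forall_ne_add_sum [IsFiniteMeasure P] (X : Ω → α) (Y : ι → Ω → α)
    (s : Finset ι) (x : α) :
    P.real {ω | X ω = x} ≤
      P.real {ω | X ω = x ∧ ∀ u ∈ s, Y u ω ≠ x} + ∑ u ∈ s, P.real {ω | X ω = x ∧ Y u ω = x} := by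
  have hcover : {ω | X ω = x} ⊆
      {ω | X ω = x ∧ ∀ u ∈ s, Y u ω ≠ x} ∪ ⋃ u ∈ s, {ω | X ω = x ∧ Y u ω = x} := by
    intro ω hω
    by_cases h : ∀ u ∈ s, Y u ω ≠ x
    · exact Or.inl ⟨hω, h⟩
    · push Not at h
      obtain ⟨u, hu, hux⟩ := h
      exact Or.inr (Set.mem_biUnion hu ⟨hω, hux⟩)
  calc P.real {ω | X ω = x}
      ≤ P.real ({ω | X ω = x ∧ ∀ u ∈ s, Y u ω ≠ x} ∪ ⋃ u ∈ s, {ω | X ω = x ∧ Y u ω = x}) :=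
        measureReal_mono hcover
    _ ≤ _ := (measureReal_union_le _ _).trans (by gcongr; exact measureReal_biUnion_finset_le _ _)

variable [MeasurableSpace α] [MeasurableSingletonClass α]

lemma ProbabilityTheory.IndepFun.measureReal_eq_and_eq {X Y : Ω → α} (h : IndepFun X Y P)
    (x y : α) :
    P.real {ω | X ω = x ∧ Y ω = y} = P.real {ω | X ω = x} * P.real {ω | Y ω = y} := by
  simpa [measureReal_def, Set.preimage, Set.ofPred_and] using
    congrArg ENNReal.toReal (h.measure_inter_preimage_eq_mul {x} {y}
      (measurableSet_singleton x) (measurableSet_singleton y))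

lemma sum_measureReal_eq_le_one_sub [IsProbabilityMeasure P] {X : Ω → α} (hX : Measurable X)
    {S : Finset α} {a : α} (ha : a ∉ S) :
    ∑ x ∈ S, P.real {ω | X ω = x} ≤ 1 - P.real {ω | X ω = a} := by
  calc ∑ x ∈ S, P.real (X ⁻¹' {x}) = P.real (X ⁻¹' S) :=
        sum_measureReal_preimage_singleton S fun x _ => hX (measurableSet_singleton x)
    _ ≤ P.real (X ⁻¹' {a})ᶜ := measureReal_mono fun ω hω h => ha (h ▸ hω)
    _ = 1 - P.real {ω | X ω = a} := probReal_compl_eq_one_sub (hX (measurableSet_singleton a))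

lemma sum_sub_sum_mul_le_measureReal_forall_ne [IsFiniteMeasure P] {X : Ω → α} {Y : ι → Ω → α}
    (hX : Measurable X) (hY : ∀ u, Measurable (Y u)) (S : Finset α) (s : Finset ι)
    (hindep : ∀ u ∈ s, IndepFun X (Y u) P) :
    ∑ x ∈ S, (P.real {ω | X ω = x} - ∑ u ∈ s, P.real {ω | X ω = x} * P.real {ω | Y u ω = x}) ≤
      P.real {ω | X ω ∈ S ∧ ∀ u ∈ s, Y u ω ≠ X ω} := by
  set B : α → Set Ω := fun x => {ω | X ω = x ∧ ∀ u ∈ s, Y u ω ≠ x}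
  have hB : ∀ x, MeasurableSet (B x) := fun x => by
    simp only [B, Set.ofPred_and, Set.ofPred_forall]
    exact (hX (measurableSet_singleton x)).inter <| .biInter s.countable_toSet fun u _ =>
      (hY u (measurableSet_singleton x)).compl
  have hdisj : (S : Set α).PairwiseDisjoint B := fun x _ y _ hxy =>
    Set.disjoint_left.mpr fun ω hx hy => hxy (hx.1.symm.trans hy.1)
  calc _ ≤ ∑ x ∈ S, P.real (B x) := Finset.sum_le_sum fun x _ => by
        rw [sub_le_iff_le_add]
        refine (measureReal_eq_le_forall_ne_add_sum X Y s x).trans_eq ?_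
        rw [Finset.sum_congr rfl fun u hu => (hindep u hu).measureReal_eq_and_eq x x]
    _ = P.real (⋃ x ∈ S, B x) := (measureReal_biUnion_finset hdisj fun x _ => hB x).symm
    _ ≤ _ := measureReal_mono <| Set.iUnion₂_subset fun x hx ω hω => by
        obtain ⟨rfl, h⟩ := hω
        exact ⟨hx, h⟩

end

lemma quarter_lt_sum_sub_sum_mul {ι α : Type*} (S : Finset α) (s : Finset ι) (p : ι → α → ℝ)
    (hp : ∀ u ∈ s, ∑ x ∈ S, p u x ≤ 1 / 2) (hcard : s.card < S.card) :
    1 / 4 < ∑ x ∈ S, (1 / (2 * S.card) - ∑ u ∈ s, 1 / (2 * S.card) * p u x) := by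
  have hk : (0 : ℝ) < S.card := by exact_mod_cast (Nat.zero_le _).trans_lt hcard
  have hd : (s.card : ℝ) + 1 ≤ S.card := by exact_mod_cast hcard
  have hsum : ∑ u ∈ s, ∑ x ∈ S, p u x ≤ s.card * (1 / 2) :=
    (Finset.sum_le_sum hp).trans_eq (by rw [Finset.sum_const, nsmul_eq_mul])
  have hexpand : ∑ x ∈ S, (1 / (2 * S.card) - ∑ u ∈ s, 1 / (2 * S.card) * p u x) =
      1 / 2 - 1 / (2 * S.card) * ∑ u ∈ s, ∑ x ∈ S, p u x := by
    rw [Finset.sum_sub_distrib, Finset.sum_const, nsmul_eq_mul, Finset.sum_comm]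
    simp_rw [← Finset.mul_sum]
    field_simp
  calc (1 : ℝ) / 4 < 1 / 2 - 1 / (2 * S.card) * (s.card * (1 / 2)) := by
        field_simp
        linarith
    _ ≤ 1 / 2 - 1 / (2 * S.card) * ∑ u ∈ s, ∑ x ∈ S, p u x := by gcongr
    _ = _ := hexpand.symm

theorem per_iteration_coloring_general
    {V : Type*} [Fintype V]
    (G : SimpleGraph V) [DecidableRel G.Adj]
    (L : V → Finset ℕ)
    (hL0 : ∀ u, 0 ∉ L u)
    {Ω : Type*} [MeasurableSpace Ω] (P : Measure Ω) [IsProbabilityMeasure P]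
    (c : V → Ω → ℕ)
    (hmeas : ∀ u, Measurable (c u))
    (hindep : iIndepFun c P)
    (hzero : ∀ u, P {ω | c u ω = 0} = 1 / 2)
    (hcol : ∀ u, ∀ x ∈ L u, P {ω | c u ω = x} = 1 / (2 * ((L u).card : ℝ≥0∞)))
    (v : V)
    (hdeg : G.degree v + 1 ≤ (L v).card) :
    1 / 4 < P {ω | c v ω ≠ 0 ∧ ∀ u ∈ G.neighborFinset v, c u ω ≠ c v ω} := by
  have hcolv : ∀ x ∈ L v, P.real {ω | c v ω = x} = 1 / (2 * (L v).card) := fun x hx => by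
    simp [measureReal_def, hcol v x hx, ENNReal.toReal_inv]
  have hsum : ∀ u, ∑ x ∈ L v, P.real {ω | c u ω = x} ≤ 1 / 2 := fun u =>
    (sum_measureReal_eq_le_one_sub (hmeas u) (hL0 v)).trans_eq
      (by rw [measureReal_def, hzero u]; norm_num)
  have hgood := sum_sub_sum_mul_le_measureReal_forall_ne (hmeas v) hmeas (L v)
    (G.neighborFinset v) fun u hu =>
      hindep.indepFun (G.ne_of_adj ((G.mem_neighborFinset v u).1 hu))
  rw [Finset.sum_congr rfl fun x hx => by rw [hcolv x hx]] at hgood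
  have hquarter := quarter_lt_sum_sub_sum_mul (L v) (G.neighborFinset v)
    (fun u x => P.real {ω | c u ω = x}) (fun u _ => hsum u)
    (by rwa [G.card_neighborFinset_eq_degree])
  have hsubset : {ω | c v ω ∈ L v ∧ ∀ u ∈ G.neighborFinset v, c u ω ≠ c v ω} ⊆
      {ω | c v ω ≠ 0 ∧ ∀ u ∈ G.neighborFinset v, c u ω ≠ c v ω} :=
    fun ω ⟨hL, hne⟩ => ⟨fun h => hL0 v (h ▸ hL), hne⟩
  rw [← ofReal_measureReal, ENNReal.lt_ofReal_iff_toReal_lt (by simp)]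
  simpa using (hquarter.trans_le hgood).trans_le (measureReal_mono hsubset)

/-- **Per-iteration coloring lemma.**
Let `G` be a finite simple graph on vertex set `V`. Each vertex `u` has a finite
nonempty list `L u ⊆ ℕ ∖ {0}` of colors. Independently for each vertex `u`, a random
tentative color `c u` is sampled: `c u = 0` with probability `1/2`, and `c u = x` with
probability `1/(2·|L u|)` for each `x ∈ L u`. If `|L v| ≥ deg(v) + 1`, then the
probability that `c v ≠ 0` and `c u ≠ c v` for every neighbor `u` of `v` is
strictly greater than `1/4`. -/
theorem per_iteration_coloring
    {V : Type*} [Fintype V] [DecidableEq V]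
    (G : SimpleGraph V) [DecidableRel G.Adj]
    (L : V → Finset ℕ)
    (hL0 : ∀ u, 0 ∉ L u) (hLne : ∀ u, (L u).Nonempty)
    {Ω : Type*} [MeasurableSpace Ω] (P : Measure Ω) [IsProbabilityMeasure P]
    (c : V → Ω → ℕ)
    (hmeas : ∀ u, Measurable (c u))
    (hindep : iIndepFun c P)
    (hzero : ∀ u, P {ω | c u ω = 0} = 1 / 2)
    (hcol : ∀ u, ∀ x ∈ L u, P {ω | c u ω = x} = 1 / (2 * ((L u).card : ℝ≥0∞)))
    (v : V)
    (hdeg : G.degree v + 1 ≤ (L v).card) :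
    1 / 4 < P {ω | c v ω ≠ 0 ∧ ∀ u ∈ G.neighborFinset v, c u ω ≠ c v ω} :=
  per_iteration_coloring_general G L hL0 P c hmeas hindep hzero hcol v hdeg
end

section
/- Fix a vertex v of G with |L_v| ≥ deg(v) + 1. Then the conditional probability Pr[∃ u ∈ N(v) : c_u = c_v | c_v ≠ 0] is at most deg(v)/(2·|L_v|), and in particular is strictly less than 1/2. -/
open MeasureTheory ProbabilityTheory ENNReal

/-!
Up to a null set, `c v ≠ 0` forces `c v ∈ L v`, where each colour has mass `1/(2·|L v|)`. By
independence, a fixed neighbour `u` then satisfies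
`Pr[c v ∈ L v ∧ c u = c v] = Pr[c u ∈ L v] / (2·|L v|) ≤ Pr[c u ≠ 0] / (2·|L v|) = 1/(4·|L v|)`,
since `0 ∉ L v`. A union bound over the neighbours and division by `Pr[c v ≠ 0] = 1/2` give
`deg(v)/(2·|L v|)`, which is `< 1/2` as `deg(v) < |L v|`.
-/

lemma ENNReal.natCast_mul_one_div_two_mul {k : ℕ} (hk : k ≠ 0) :
    (k : ℝ≥0∞) * (1 / (2 * k)) = 1 / 2 := by
  rw [mul_one_div, ← ENNReal.mul_div_mul_right 1 2 (Nat.cast_ne_zero.2 hk) (natCast_ne_top k),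
    one_mul]

lemma measure_ne_inter_exists_eq_le_sum {Ω ι α : Type*} [MeasurableSpace Ω] [DecidableEq α]
    {μ : Measure Ω} (S : Finset ι) (X : ι → Ω → α) (Y : Ω → α) {a : α} {s : Finset α}
    (hnull : μ {ω | Y ω ∉ insert a s} = 0) :
    μ ({ω | Y ω ≠ a} ∩ {ω | ∃ u ∈ S, X u ω = Y ω})
      ≤ ∑ u ∈ S, μ {ω | Y ω ∈ s ∧ X u ω = Y ω} := by
  have hsub : {ω | Y ω ≠ a} ∩ {ω | ∃ u ∈ S, X u ω = Y ω}
      ⊆ {ω | Y ω ∉ insert a s} ∪ ⋃ u ∈ S, {ω | Y ω ∈ s ∧ X u ω = Y ω} := by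
    rintro ω ⟨hne, u, hu, heq⟩
    by_cases hs : Y ω ∈ s
    · exact Or.inr (Set.mem_biUnion hu ⟨hs, heq⟩)
    · exact Or.inl fun h => (Finset.mem_insert.1 h).elim hne hs
  calc _ ≤ μ {ω | Y ω ∉ insert a s} + μ (⋃ u ∈ S, {ω | Y ω ∈ s ∧ X u ω = Y ω}) :=
        (measure_mono hsub).trans (measure_union_le _ _)
    _ ≤ _ := by rw [hnull, zero_add]; exact measure_biUnion_finset_le _ _

section

variable {Ω α : Type*} [MeasurableSpace Ω] [MeasurableSpace α] [MeasurableSingletonClass α]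
  {μ : Measure Ω} {X Y : Ω → α}

lemma measure_notMem_eq_zero_of_sum_eq_one [IsProbabilityMeasure μ] (hY : Measurable Y)
    {s : Finset α} (h : ∑ x ∈ s, μ {ω | Y ω = x} = 1) : μ {ω | Y ω ∉ s} = 0 := by
  change ∑ x ∈ s, μ (Y ⁻¹' {x}) = 1 at h
  rw [sum_measure_preimage_singleton s fun x _ => hY (measurableSet_singleton x)] at h
  exact (prob_compl_eq_zero_iff (hY s.measurableSet)).2 h

lemma ProbabilityTheory.IndepFun.measure_mem_and_eq_le (hXY : IndepFun X Y μ) (hX : Measurable X)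
    (s : Finset α) {p : ℝ≥0∞} (hp : ∀ x ∈ s, μ {ω | Y ω = x} = p) :
    μ {ω | Y ω ∈ s ∧ X ω = Y ω} ≤ μ {ω | X ω ∈ s} * p := by
  have hsub : {ω | Y ω ∈ s ∧ X ω = Y ω} ⊆ ⋃ x ∈ s, X ⁻¹' {x} ∩ Y ⁻¹' {x} := by
    rintro ω ⟨hs, heq⟩
    exact Set.mem_biUnion hs ⟨heq, rfl⟩
  calc _ ≤ ∑ x ∈ s, μ (X ⁻¹' {x} ∩ Y ⁻¹' {x}) := (measure_mono hsub).trans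
        (measure_biUnion_finset_le _ _)
    _ = ∑ x ∈ s, μ (X ⁻¹' {x}) * p := Finset.sum_congr rfl fun x hx => by
        rw [hXY.measure_inter_preimage_eq_mul _ _ (measurableSet_singleton x)
          (measurableSet_singleton x), ← hp x hx]; rfl
    _ = μ {ω | X ω ∈ s} * p := by
        rw [← Finset.sum_mul, sum_measure_preimage_singleton s
          fun x _ => hX (measurableSet_singleton x)]; rfl

end

section TentativeColour

variable {Ω : Type*} [MeasurableSpace Ω] {μ : Measure Ω} {Y : Ω → ℕ} {L : Finset ℕ}

lemma sum_measure_eq_insert_zero_eq_one (hL0 : 0 ∉ L) (hL : L.Nonempty)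
    (hzero : μ {ω | Y ω = 0} = 1 / 2)
    (hcol : ∀ x ∈ L, μ {ω | Y ω = x} = 1 / (2 * (L.card : ℝ≥0∞))) :
    ∑ x ∈ insert 0 L, μ {ω | Y ω = x} = 1 := by
  rw [Finset.sum_insert hL0, hzero, Finset.sum_congr rfl hcol, Finset.sum_const, nsmul_eq_mul,
    ENNReal.natCast_mul_one_div_two_mul hL.card_pos.ne', ENNReal.add_halves]

lemma measure_ne_zero_eq_half [IsProbabilityMeasure μ] (hY : Measurable Y)
    (hzero : μ {ω | Y ω = 0} = 1 / 2) : μ {ω | Y ω ≠ 0} = 1 / 2 := by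
  rw [show {ω | Y ω ≠ 0} = {ω | Y ω = 0}ᶜ from rfl,
    prob_compl_eq_one_sub (s := {ω | Y ω = 0}) (hY (measurableSet_singleton 0)), hzero, one_div,
    ENNReal.one_sub_inv_two]

lemma measure_mem_le_half [IsProbabilityMeasure μ] (hY : Measurable Y)
    (hzero : μ {ω | Y ω = 0} = 1 / 2) {s : Finset ℕ} (hs : 0 ∉ s) : μ {ω | Y ω ∈ s} ≤ 1 / 2 :=
  (measure_mono fun ω (hω : Y ω ∈ s) (h0 : Y ω = 0) => hs (h0 ▸ hω)).trans
    (measure_ne_zero_eq_half hY hzero).le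

end TentativeColour

theorem neighborhood_union_bound_general
    {V : Type*} [Fintype V]
    (G : SimpleGraph V) [DecidableRel G.Adj]
    (L : V → Finset ℕ)
    (hL0 : ∀ u, 0 ∉ L u)
    {Ω : Type*} [MeasurableSpace Ω] (P : Measure Ω) [IsProbabilityMeasure P]
    (c : V → Ω → ℕ)
    (hmeas : ∀ u, Measurable (c u))
    (hindep : iIndepFun c P)
    (hzero : ∀ u, P {ω | c u ω = 0} = 1 / 2)
    (hcol : ∀ u, ∀ x ∈ L u, P {ω | c u ω = x} = 1 / (2 * ((L u).card : ℝ≥0∞)))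
    (v : V)
    (hdeg : G.degree v + 1 ≤ (L v).card) :
    P[{ω | ∃ u ∈ G.neighborFinset v, c u ω = c v ω} | {ω | c v ω ≠ 0}]
        ≤ (G.degree v : ℝ≥0∞) / (2 * ((L v).card : ℝ≥0∞))
      ∧ P[{ω | ∃ u ∈ G.neighborFinset v, c u ω = c v ω} | {ω | c v ω ≠ 0}] < 1 / 2 := by
  set A := {ω | ∃ u ∈ G.neighborFinset v, c u ω = c v ω}
  set q : ℝ≥0∞ := 1 / (2 * ((L v).card : ℝ≥0∞))
  have hk : (L v).card ≠ 0 := by omega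
  have hB : P {ω | c v ω ≠ 0} = 1 / 2 := measure_ne_zero_eq_half (hmeas v) (hzero v)
  have hnull : P {ω | c v ω ∉ insert 0 (L v)} = 0 :=
    measure_notMem_eq_zero_of_sum_eq_one (hmeas v) <|
      sum_measure_eq_insert_zero_eq_one (hL0 v) (Finset.card_ne_zero.1 hk) (hzero v) (hcol v)
  have hcollision : ∀ u ∈ G.neighborFinset v, P {ω | c v ω ∈ L v ∧ c u ω = c v ω} ≤ 1 / 2 * q :=
    fun u hu =>
    have huv : u ≠ v := (G.ne_of_adj ((G.mem_neighborFinset v u).1 hu)).symm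
    ((hindep.indepFun huv).measure_mem_and_eq_le (hmeas u) (L v) (hcol v)).trans <|
      mul_le_mul_left (measure_mem_le_half (hmeas u) (hzero u) (hL0 v)) q
  have hinter : P ({ω | c v ω ≠ 0} ∩ A) ≤ G.degree v * (1 / 2 * q) :=
    calc _ ≤ ∑ u ∈ G.neighborFinset v, P {ω | c v ω ∈ L v ∧ c u ω = c v ω} :=
          measure_ne_inter_exists_eq_le_sum _ c (c v) hnull
      _ ≤ _ := by
          simpa [G.card_neighborFinset_eq_degree] using Finset.sum_le_sum hcollision
  have hcond : P[A | {ω | c v ω ≠ 0}] ≤ G.degree v / (2 * (L v).card) :=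
    calc P[A | {ω | c v ω ≠ 0}] = (1 / 2)⁻¹ * P ({ω | c v ω ≠ 0} ∩ A) := by
          have hBmeas : MeasurableSet {ω | c v ω ≠ 0} :=
            (hmeas v (measurableSet_singleton 0)).compl
          rw [cond_apply hBmeas, hB]
      _ ≤ (1 / 2)⁻¹ * (G.degree v * (1 / 2 * q)) := by gcongr
      _ = G.degree v / (2 * (L v).card) := by
          rw [mul_left_comm, ← mul_assoc (1 / 2 : ℝ≥0∞)⁻¹,
            ENNReal.inv_mul_cancel (by simp) (by simp), one_mul, mul_one_div]
  refine ⟨hcond, hcond.trans_lt ?_⟩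
  rw [← ENNReal.natCast_mul_one_div_two_mul hk, mul_one_div]
  exact ENNReal.div_lt_div_right (by simp [hk]) (mul_ne_top ofNat_ne_top (natCast_ne_top _))
    (by exact_mod_cast hdeg)

/-- **Union bound over the neighborhood.**
Each vertex `u` of a finite graph `G` has a finite nonempty list `L u ⊆ ℕ ∖ {0}` of colors,
and independently for each vertex, a random tentative color `c u` is sampled: `c u = 0` with
probability `1/2`, and `c u = x` with probability `1/(2·|L u|)` for each `x ∈ L u`.
If `|L v| ≥ deg(v) + 1`, then
`Pr[∃ u ∈ N(v), c u = c v | c v ≠ 0] ≤ deg(v)/(2·|L v|) < 1/2`. -/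
theorem neighborhood_union_bound
    {V : Type*} [Fintype V] [DecidableEq V]
    (G : SimpleGraph V) [DecidableRel G.Adj]
    (L : V → Finset ℕ)
    (hL0 : ∀ u, 0 ∉ L u) (hLne : ∀ u, (L u).Nonempty)
    {Ω : Type*} [MeasurableSpace Ω] (P : Measure Ω) [IsProbabilityMeasure P]
    (c : V → Ω → ℕ)
    (hmeas : ∀ u, Measurable (c u))
    (hindep : iIndepFun c P)
    (hzero : ∀ u, P {ω | c u ω = 0} = 1 / 2)
    (hcol : ∀ u, ∀ x ∈ L u, P {ω | c u ω = x} = 1 / (2 * ((L u).card : ℝ≥0∞)))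
    (v : V)
    (hdeg : G.degree v + 1 ≤ (L v).card) :
    P[{ω | ∃ u ∈ G.neighborFinset v, c u ω = c v ω} | {ω | c v ω ≠ 0}]
        ≤ (G.degree v : ℝ≥0∞) / (2 * ((L v).card : ℝ≥0∞))
      ∧ P[{ω | ∃ u ∈ G.neighborFinset v, c u ω = c v ω} | {ω | c v ω ≠ 0}] < 1 / 2 :=
  neighborhood_union_bound_general G L hL0 P c hmeas hindep hzero hcol v hdeg
end
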